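/- arXiv:2003.02596 — 4 statements merged into one kernel-verified Lean document; each statement's English description precedes it below -/
import Mathlib

section
/- The set Y = W_6 \ W_3 of 27 points is precisely the zero locus in ℙ^2 of the three polynomials f_1=x^6-y^6, f_2=x^6-z^6, f_3=(x^3+z^3)(y^3+z^3): a point (x:y:z) ∈ ℙ^2(ℂ) satisfies f_1=f_2=f_3=0 if and only if it lies in Y. -/
/-- A point `(x:y:z)` of `ℙ²(ℂ)` satisfies `x⁶-y⁶ = x⁶-z⁶ = (x³+z³)(y³+z³) = 0`
iff it lies in `Y = W₆ \ W₃`, i.e. iff `(x,y,z)` is a nonzero scalar multiple of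
`(1,u,v)` with `u⁶ = v⁶ = 1` and not both `u³ = 1` and `v³ = 1`. -/
theorem stmt4 :
    ∀ x y z : ℂ, (x, y, z) ≠ (0, 0, 0) →
      ((x ^ 6 - y ^ 6 = 0 ∧ x ^ 6 - z ^ 6 = 0 ∧
          (x ^ 3 + z ^ 3) * (y ^ 3 + z ^ 3) = 0) ↔
        ∃ t u v : ℂ, t ≠ 0 ∧ u ^ 6 = 1 ∧ v ^ 6 = 1 ∧
          ¬(u ^ 3 = 1 ∧ v ^ 3 = 1) ∧ (x, y, z) = (t, t * u, t * v)) := by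
  intro x y z hxyz
  constructor
  · rintro ⟨h1, h2, h3⟩
    have hx : x ≠ 0 := by
      intro hx
      apply hxyz
      subst hx
      have hy : y = 0 := by
        have : y ^ 6 = 0 := by linear_combination -h1
        exact pow_eq_zero_iff (by norm_num) |>.mp this
      have hz : z = 0 := by
        have : z ^ 6 = 0 := by linear_combination -h2
        exact pow_eq_zero_iff (by norm_num) |>.mp this
      simp [hy, hz]
    refine ⟨x, y / x, z / x, hx, ?_, ?_, ?_, ?_⟩
    · rw [div_pow]
      rw [div_eq_one_iff_eq (pow_ne_zero _ hx)]
      linear_combination -h1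
    · rw [div_pow]
      rw [div_eq_one_iff_eq (pow_ne_zero _ hx)]
      linear_combination -h2
    · rintro ⟨hu, hv⟩
      rw [div_pow, div_eq_one_iff_eq (pow_ne_zero _ hx)] at hu hv
      have hx3 : x ^ 3 ≠ 0 := pow_ne_zero _ hx
      rw [hu, hv] at h3
      have : (4 : ℂ) * (x ^ 3 * x ^ 3) = 0 := by linear_combination h3
      have := mul_eq_zero.mp this
      rcases this with h | h
      · norm_num at h
      · exact hx3 (mul_self_eq_zero.mp h)
    · simp [mul_div_cancel₀, hx]
  · rintro ⟨t, u, v, ht, hu, hv, hnot, heq⟩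
    obtain ⟨hx, hy, hz⟩ : x = t ∧ y = t * u ∧ z = t * v := by
      simpa [Prod.ext_iff] using heq
    subst hx hy hz
    refine ⟨by linear_combination -(x^6) * hu, by linear_combination -(x^6) * hv, ?_⟩
    have hu3 : u ^ 3 = 1 ∨ u ^ 3 = -1 := by
      have : (u ^ 3 - 1) * (u ^ 3 + 1) = 0 := by linear_combination hu
      rcases mul_eq_zero.mp this with h | h
      · exact Or.inl (by linear_combination h)
      · exact Or.inr (by linear_combination h)
    have hv3 : v ^ 3 = 1 ∨ v ^ 3 = -1 := by
      have : (v ^ 3 - 1) * (v ^ 3 + 1) = 0 := by linear_combination hv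
      rcases mul_eq_zero.mp this with h | h
      · exact Or.inl (by linear_combination h)
      · exact Or.inr (by linear_combination h)
    rcases hv3 with h | h
    · rcases hu3 with h' | h'
      · exact absurd ⟨h', h⟩ hnot
      · have : u ^ 3 + v ^ 3 = 0 := by rw [h, h']; ring
        have e : (x * u) ^ 3 + (x * v) ^ 3 = 0 := by linear_combination x^3 * this
        rw [show ((x:ℂ) ^ 3 + (x * v) ^ 3) * ((x * u) ^ 3 + (x * v) ^ 3) = ((x:ℂ) ^ 3 + (x * v) ^ 3) * (((x * u) ^ 3 + (x * v) ^ 3)) from rfl, e, mul_zero]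
    · have e : (x : ℂ) ^ 3 + (x * v) ^ 3 = 0 := by linear_combination x^3 * h
      rw [e, zero_mul]
end

section
/- For every (a,b,c) ∈ ℂ^3, the degree-7 polynomial γ = a^2(5c^3-a^3)h_1 + b^2(b^3-5c^3)h_2 + c^2(c^3-5a^3)h_3 + c^2(5b^3-c^3)h_4 + 5b^2(a^3-c^3)h_5 + 5a^2(c^3-b^3)h_6 vanishes together with all its first-order partial derivatives in x,y,z at the point (x,y,z)=(a,b,c). -/
open MvPolynomial

/-- The degree-7 polynomial `γ` attached to a point `(a:b:c)`. -/
noncomputable def gammaP (a b c : ℂ) : MvPolynomial (Fin 3) ℂ :=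
  C (a ^ 2 * (5 * c ^ 3 - a ^ 3)) * (X 0 * ((X 1) ^ 6 - (X 2) ^ 6)) +
  C (b ^ 2 * (b ^ 3 - 5 * c ^ 3)) * (X 1 * ((X 0) ^ 6 - (X 2) ^ 6)) +
  C (c ^ 2 * (c ^ 3 - 5 * a ^ 3)) *
    (X 2 * ((X 0) ^ 3 + (X 1) ^ 3) * ((X 1) ^ 3 + (X 2) ^ 3)) +
  C (c ^ 2 * (5 * b ^ 3 - c ^ 3)) *
    (X 2 * ((X 0) ^ 3 + (X 1) ^ 3) * ((X 0) ^ 3 + (X 2) ^ 3)) +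
  C (5 * b ^ 2 * (a ^ 3 - c ^ 3)) *
    (X 1 * ((X 0) ^ 3 + (X 2) ^ 3) * ((X 1) ^ 3 + (X 2) ^ 3)) +
  C (5 * a ^ 2 * (c ^ 3 - b ^ 3)) *
    (X 0 * ((X 0) ^ 3 + (X 2) ^ 3) * ((X 1) ^ 3 + (X 2) ^ 3))

/-- `γ` and all its first-order partials in `x,y,z` vanish at `(a,b,c)`. -/
theorem stmt8 (a b c : ℂ) :
    eval ![a, b, c] (gammaP a b c) = 0 ∧
    ∀ i : Fin 3, eval ![a, b, c] (pderiv i (gammaP a b c)) = 0 := by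
  constructor
  · simp only [gammaP, eval_add, eval_mul, eval_sub, eval_pow, eval_C, eval_X,
      Matrix.cons_val_zero, Matrix.cons_val_one, Matrix.head_cons,
      Matrix.cons_val_two, Matrix.tail_cons]
    ring
  · intro i
    fin_cases i <;>
    · simp only [gammaP, map_add, pderiv_mul, pderiv_C, pderiv_X, map_sub, map_pow,
        Pi.single_apply, eval_add, eval_mul, eval_sub, eval_pow, eval_C, eval_X,
        Derivation.leibniz_pow, pderiv_X, smul_eq_mul, Matrix.cons_val_zero,
        Matrix.cons_val_one, Matrix.head_cons, Matrix.cons_val_two, Matrix.tail_cons]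
      simp
      ring
end

section
/- For every (a,b,c) ∈ ℂ^3, all second-order partial derivatives in x,y,z of the polynomial γ (defined as a^2(5c^3-a^3)h_1 + b^2(b^3-5c^3)h_2 + c^2(c^3-5a^3)h_3 + c^2(5b^3-c^3)h_4 + 5b^2(a^3-c^3)h_5 + 5a^2(c^3-b^3)h_6) vanish at (x,y,z)=(a,b,c); hence the curve γ=0 has multiplicity at least 3 at the general point (a:b:c). -/
/-!
Since `γ` is homogeneous of degree 7, Euler's identity `∑ xᵢ ∂ᵢF = (deg F) F` (in characteristic
zero) shows that a homogeneous polynomial of positive degree vanishes wherever all its first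
partials do. Applied to the first partials of `γ`, homogeneous of degree 6, and then to `γ`
itself, it reduces the whole statement to the vanishing of the second partials at `(a, b, c)`,
which is a direct computation.
-/

open MvPolynomial

theorem MvPolynomial.IsHomogeneous.eval_eq_zero_of_forall_eval_pderiv_eq_zero
    {R σ : Type*} [CommSemiring R] [NoZeroDivisors R] [CharZero R] [Fintype σ]
    {φ : MvPolynomial σ R} {n : ℕ} (hφ : φ.IsHomogeneous n) (hn : n ≠ 0) (p : σ → R)
    (h : ∀ i, eval p (pderiv i φ) = 0) :
    eval p φ = 0 := by
  have euler := congrArg (eval p) hφ.sum_X_mul_pderiv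
  simpa [h, hn] using euler.symm

theorem isHomogeneous_gammaP (a b c : ℂ) : (gammaP a b c).IsHomogeneous 7 := by
  have hX (i : Fin 3) : (X i : MvPolynomial (Fin 3) ℂ).IsHomogeneous 1 := isHomogeneous_X ℂ i
  have hP (i : Fin 3) (n : ℕ) := isHomogeneous_X_pow (R := ℂ) i n
  have h₁ (i j k : Fin 3) :
      (X i * (X j ^ 6 - X k ^ 6) : MvPolynomial (Fin 3) ℂ).IsHomogeneous 7 :=
    (hX i).mul ((hP j 6).sub (hP k 6))
  have h₂ (i j k l m : Fin 3) :
      (X i * (X j ^ 3 + X k ^ 3) * (X l ^ 3 + X m ^ 3) : MvPolynomial (Fin 3) ℂ).IsHomogeneous 7 :=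
    ((hX i).mul ((hP j 3).add (hP k 3))).mul ((hP l 3).add (hP m 3))
  exact ((((((h₁ 0 1 2).C_mul _).add ((h₁ 1 0 2).C_mul _)).add ((h₂ 2 0 1 1 2).C_mul _)).add
    ((h₂ 2 0 1 0 2).C_mul _)).add ((h₂ 1 0 2 1 2).C_mul _)).add ((h₂ 0 0 2 1 2).C_mul _)

theorem eval_pderiv_pderiv_gammaP (a b c : ℂ) (i j : Fin 3) :
    eval ![a, b, c] (pderiv i (pderiv j (gammaP a b c))) = 0 := by
  fin_cases i <;> fin_cases j <;>
    · simp only [gammaP, map_add, map_sub, pderiv_mul, pderiv_pow, pderiv_X,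
        Derivation.map_natCast]
      simp
      ring

/-- All second-order partials of `γ` in `x,y,z` vanish at `(a,b,c)`; together
with vanishing of `γ` and its first partials, the curve `γ = 0` has
multiplicity at least `3` at `(a:b:c)`. -/
theorem stmt9 (a b c : ℂ) :
    eval ![a, b, c] (gammaP a b c) = 0 ∧
    (∀ i : Fin 3, eval ![a, b, c] (pderiv i (gammaP a b c)) = 0) ∧
    (∀ i j : Fin 3,
      eval ![a, b, c] (pderiv i (pderiv j (gammaP a b c))) = 0) := by
  have hγ := isHomogeneous_gammaP a b c
  have second := eval_pderiv_pderiv_gammaP a b c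
  have first (j : Fin 3) : eval ![a, b, c] (pderiv j (gammaP a b c)) = 0 :=
    hγ.pderiv.eval_eq_zero_of_forall_eval_pderiv_eq_zero (by norm_num) _ (second · j)
  exact ⟨hγ.eval_eq_zero_of_forall_eval_pderiv_eq_zero (by norm_num) _ first, first, second⟩
end

section
/- The six quintic polynomials u_1=a^2(5c^3-a^3), u_2=b^2(b^3-5c^3), u_3=c^2(c^3-5a^3), u_4=c^2(5b^3-c^3), u_5=5b^2(a^3-c^3), u_6=5a^2(c^3-b^3) have no common zero in ℂ^3 other than (0,0,0); i.e., the linear system they span is base point free on ℙ^2. -/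
/-- The six quintics `u₁,…,u₆` have no common zero in `ℂ³` other than the
origin: the linear system `Λ` they span is base point free. -/
theorem stmt12 :
    ∀ a b c : ℂ,
      a ^ 2 * (5 * c ^ 3 - a ^ 3) = 0 →
      b ^ 2 * (b ^ 3 - 5 * c ^ 3) = 0 →
      c ^ 2 * (c ^ 3 - 5 * a ^ 3) = 0 →
      c ^ 2 * (5 * b ^ 3 - c ^ 3) = 0 →
      5 * b ^ 2 * (a ^ 3 - c ^ 3) = 0 →
      5 * a ^ 2 * (c ^ 3 - b ^ 3) = 0 →
      a = 0 ∧ b = 0 ∧ c = 0 := by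
  intro a b c h1 h2 h3 h4 h5 h6
  by_cases hc : c = 0
  · subst hc
    simp only [mul_eq_zero, pow_eq_zero_iff] at h1 h2
    have ha : a = 0 := by
      rcases h1 with h | h
      · exact pow_eq_zero_iff (by norm_num) |>.mp h
      · have : a ^ 3 = 0 := by linear_combination -h
        exact pow_eq_zero_iff (by norm_num) |>.mp this
    have hb : b = 0 := by
      rcases h2 with h | h
      · exact pow_eq_zero_iff (by norm_num) |>.mp h
      · have : b ^ 3 = 0 := by linear_combination h
        exact pow_eq_zero_iff (by norm_num) |>.mp this
    exact ⟨ha, hb, rfl⟩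
  · exfalso
    have hc2 : c ^ 2 ≠ 0 := pow_ne_zero _ hc
    have h3' : c ^ 3 = 5 * a ^ 3 := by
      rcases mul_eq_zero.mp h3 with h | h
      · exact absurd h hc2
      · linear_combination h
    have ha : a ≠ 0 := by
      intro h; apply hc
      have : c ^ 3 = 0 := by rw [h3', h]; ring
      exact pow_eq_zero_iff (by norm_num) |>.mp this
    have h1' : 5 * c ^ 3 = a ^ 3 := by
      rcases mul_eq_zero.mp h1 with h | h
      · exact absurd h (pow_ne_zero _ ha)
      · linear_combination h
    have : (24 : ℂ) * c ^ 3 = 0 := by linear_combination 5 * h1' - h3'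
    have : c ^ 3 = 0 := by
      have h24 : (24 : ℂ) ≠ 0 := by norm_num
      exact (mul_eq_zero.mp this).resolve_left h24
    exact hc (pow_eq_zero_iff (by norm_num) |>.mp this)
end
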